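/- arXiv:1912.03362 — 2 statements merged into one kernel-verified Lean document; each statement's English description precedes it below -/
import Mathlib

section
/- Partition duality: let B^[r] be an r-th maximal bi-subalgebra of su(2^p) and B^[2p−r] a (2p−r)-th maximal bi-subalgebra such that ω(b,c) = 0 for all b ∈ B^[r] and c ∈ B^[2p−r] (the two bi-subalgebras commute), where 0 ≤ r ≤ 2p. Then the commutator partition of order r generated by B^[r] is the bi-subalgebra (coset) partition of order 2p−r generated by B^[2p−r]: the family of commutator subspaces { W(B) : B ∈ 𝒢(B^[r]) } is equal to the family of cosets of B^[2p−r] in V. -/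
open scoped BigOperators

namespace QAP

/-- The index group `V = Z₂^p × Z₂^p` whose elements `(ζ,α)` label the
spinor generators `S^ζ_α` of `su(2^p)`. -/
abbrev V (p : ℕ) : Type := (Fin p → ZMod 2) × (Fin p → ZMod 2)

/-- The symplectic pairing `ω((ζ,α),(η,β)) = ζ·β + η·α` over `ZMod 2`. -/
def omega {p : ℕ} (v w : V p) : ZMod 2 :=
  (∑ k, v.1 k * w.2 k) + (∑ k, w.1 k * v.2 k)

/-- `B` is an `r`-th maximal bi-subalgebra of `su(2^p)`: it is obtained from
`V` by a descending chain of `r` successive index-2 subgroups. -/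
def IsRthMax {p : ℕ} (r : ℕ) (B : AddSubgroup (V p)) : Prop :=
  ∃ c : ℕ → AddSubgroup (V p), c 0 = ⊤ ∧ c r = B ∧
    ∀ i < r, c (i + 1) ≤ c i ∧ (c (i + 1)).relIndex (c i) = 2

/-- `𝒢(G)`: the family consisting of `G` together with all its index-2 subgroups. -/
def GFam {p : ℕ} (G : AddSubgroup (V p)) : Set (AddSubgroup (V p)) :=
  {H | H = G ∨ (H ≤ G ∧ H.relIndex G = 2)}

/-- The commutator subspace `W(B)` determined by `B` relative to `B^[r]`:
elements of `V` commuting with exactly the members of `B` inside `B^[r]`. -/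
def Wspace {p : ℕ} (Br B : AddSubgroup (V p)) : Set (V p) :=
  {v | {b : V p | b ∈ Br ∧ omega v b = 0} = (B : Set (V p))}

/-- The `⊓` operation on subsets of a subgroup `G`:
`B₁ ⊓ B₂ = (B₁ ∩ B₂) ∪ ((G \ B₁) ∩ (G \ B₂))`. -/
def sqcap {p : ℕ} (G : AddSubgroup (V p)) (B₁ B₂ : Set (V p)) : Set (V p) :=
  (B₁ ∩ B₂) ∪ (((G : Set (V p)) \ B₁) ∩ (((G : Set (V p))) \ B₂))

/-! ### Auxiliary material -/

variable {p : ℕ}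

lemma omega_comm (v w : V p) : omega v w = omega w v := by
  unfold omega; exact add_comm _ _

/-- `omega` as a bilinear form over `ZMod 2`. -/
def omegaBilin (p : ℕ) : LinearMap.BilinForm (ZMod 2) (V p) :=
  LinearMap.mk₂ (ZMod 2) omega
    (fun a b c => by
      simp only [omega, Prod.fst_add, Prod.snd_add, Pi.add_apply, add_mul, mul_add,
        Finset.sum_add_distrib]
      ring)
    (fun t a c => by
      simp only [omega, Prod.smul_fst, Prod.smul_snd, Pi.smul_apply, smul_eq_mul,
        mul_assoc, mul_left_comm _ t, ← Finset.mul_sum, ← mul_add])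
    (fun a b c => by
      simp only [omega, Prod.fst_add, Prod.snd_add, Pi.add_apply, add_mul, mul_add,
        Finset.sum_add_distrib]
      ring)
    (fun t a c => by
      simp only [omega, Prod.smul_fst, Prod.smul_snd, Pi.smul_apply, smul_eq_mul,
        mul_assoc, mul_left_comm _ t, ← Finset.mul_sum, ← mul_add])

@[simp] lemma omegaBilin_apply (v w : V p) : omegaBilin p v w = omega v w := rfl

lemma omega_zero_left (w : V p) : omega 0 w = 0 := by
  rw [← omegaBilin_apply, map_zero]; rfl

lemma omega_zero_right (v : V p) : omega v 0 = 0 :=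
  map_zero (omegaBilin p v)

lemma omega_add_right (v w u : V p) : omega v (w + u) = omega v w + omega v u :=
  map_add (omegaBilin p v) w u

lemma omega_neg_right (v w : V p) : omega v (-w) = -omega v w :=
  map_neg (omegaBilin p v) w

lemma omega_sub_left (v w b : V p) : omega (v - w) b = omega v b - omega w b := by
  rw [← omegaBilin_apply, map_sub]; rfl

lemma omegaBilin_nondegenerate (p : ℕ) : (omegaBilin p).Nondegenerate := by
  refine (LinearMap.IsRefl.nondegenerate_iff_separatingLeft
    (fun v w h => by simpa [omega_comm w v] using h : (omegaBilin p).IsRefl)).2 ?_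
  intro v hv
  have h1 : ∀ j, v.1 j = 0 := by
    intro j
    have := hv (0, Pi.single j 1)
    simpa [omega, Pi.single_apply, mul_ite, Finset.sum_ite_eq'] using this
  have h2 : ∀ j, v.2 j = 0 := by
    intro j
    have := hv (Pi.single j 1, 0)
    simpa [omega, Pi.single_apply, ite_mul, Finset.sum_ite_eq'] using this
  ext j
  · exact h1 j
  · exact h2 j

lemma omegaBilin_isRefl (p : ℕ) : (omegaBilin p).IsRefl := by
  intro v w h
  simpa [omega_comm w v] using h

/-- The "kernel" subgroup `{b ∈ Br : ω(v,b) = 0}`. -/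
def kerSub (Br : AddSubgroup (V p)) (v : V p) : AddSubgroup (V p) where
  carrier := {b | b ∈ Br ∧ omega v b = 0}
  zero_mem' := ⟨Br.zero_mem, omega_zero_right v⟩
  add_mem' := fun ha hb => ⟨Br.add_mem ha.1 hb.1, by
    rw [omega_add_right, ha.2, hb.2, add_zero]⟩
  neg_mem' := fun ha => ⟨Br.neg_mem ha.1, by
    rw [omega_neg_right, ha.2, neg_zero]⟩

lemma mem_kerSub {Br : AddSubgroup (V p)} {v b : V p} :
    b ∈ kerSub Br v ↔ b ∈ Br ∧ omega v b = 0 := Iff.rfl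

lemma zmod2_eq_of_iff : ∀ x y : ZMod 2, (x = 0 ↔ y = 0) → x = y := by decide

lemma card_V (p : ℕ) : Nat.card (V p) = 2 ^ (2 * p) := by
  simp only [Nat.card_eq_fintype_card, Fintype.card_prod, Fintype.card_fun, ZMod.card,
    Fintype.card_fin]
  rw [two_mul, pow_add]

lemma index_of_isRthMax {r : ℕ} {B : AddSubgroup (V p)} (h : IsRthMax r B) :
    B.index = 2 ^ r := by
  obtain ⟨c, h0, hrr, hstep⟩ := h
  have key : ∀ i, i ≤ r → (c i).index = 2 ^ i := by
    intro i
    induction i with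
    | zero => intro _; simp [h0]
    | succ n ih =>
      intro hn
      have hs := hstep n (by omega)
      have hmul := AddSubgroup.relIndex_mul_index hs.1
      rw [hs.2, ih (by omega)] at hmul
      rw [← hmul]; ring
  rw [← hrr]; exact key r le_rfl

lemma finrank_of_index {B : AddSubgroup (V p)} {k : ℕ} (hk : k ≤ 2 * p)
    (h : B.index = 2 ^ k) :
    Module.finrank (ZMod 2) (AddSubgroup.toZModSubmodule 2 B) = 2 * p - k := by
  have hcard : Nat.card B * 2 ^ k = 2 ^ (2 * p) := by
    rw [← h, ← card_V p]; exact B.card_mul_index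
  have hB : Nat.card B = 2 ^ (2 * p - k) := by
    have h2 : (2 : ℕ) ^ (2 * p - k) * 2 ^ k = 2 ^ (2 * p) := by
      rw [← pow_add]; congr 1; omega
    have := hcard.trans h2.symm
    exact Nat.eq_of_mul_eq_mul_right (by positivity) this
  have hfin : Nat.card (AddSubgroup.toZModSubmodule 2 B) =
      2 ^ Module.finrank (ZMod 2) (AddSubgroup.toZModSubmodule 2 B) := by
    haveI : Fintype (AddSubgroup.toZModSubmodule 2 B) := Fintype.ofFinite _
    rw [Nat.card_eq_fintype_card, Module.card_eq_pow_finrank (K := ZMod 2), ZMod.card]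
  have hsame : Nat.card (AddSubgroup.toZModSubmodule 2 B) = Nat.card B := rfl
  have : (2 : ℕ) ^ (2 * p - k) =
      2 ^ Module.finrank (ZMod 2) (AddSubgroup.toZModSubmodule 2 B) := by
    rw [← hB, ← hsame, hfin]
  have := Nat.pow_right_injective (le_refl 2) this
  omega

/-- Partition duality: if `B^[r]` and `B^[2p−r]` are an `r`-th and
a `(2p−r)`-th maximal bi-subalgebra of `su(2^p)` that commute, then the commutator
partition generated by `B^[r]` equals the coset partition generated by `B^[2p−r]`. -/
theorem partition_duality {p r : ℕ} (hp : 1 ≤ p) (hr : r ≤ 2 * p)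
    (Br B' : AddSubgroup (V p))
    (hBr : IsRthMax r Br) (hB' : IsRthMax (2 * p - r) B')
    (hcomm : ∀ b ∈ Br, ∀ c ∈ B', omega b c = 0) :
    {S : Set (V p) | ∃ B ∈ GFam Br, S = Wspace Br B} =
      {S : Set (V p) | ∃ v : V p, S = (v + ·) '' (B' : Set (V p))} := by
  classical
  haveI : FiniteDimensional (ZMod 2) (V p) := Module.Finite.of_finite
  set BrM := AddSubgroup.toZModSubmodule 2 Br with hBrM
  set B'M := AddSubgroup.toZModSubmodule 2 B' with hB'M
  have hndeg := omegaBilin_nondegenerate p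
  have hfinV : Module.finrank (ZMod 2) (V p) = 2 * p := by
    have h1 : Fintype.card (V p) = 2 ^ Module.finrank (ZMod 2) (V p) := by
      rw [Module.card_eq_pow_finrank (K := ZMod 2), ZMod.card]
    have h2 : Fintype.card (V p) = 2 ^ (2 * p) := by
      rw [← Nat.card_eq_fintype_card, card_V]
    have := Nat.pow_right_injective (le_refl 2) (h2.symm.trans h1)
    omega
  have hrefl := omegaBilin_isRefl p
  have hfinBr : Module.finrank (ZMod 2) BrM = 2 * p - r :=
    finrank_of_index hr (index_of_isRthMax hBr)
  have hfinB' : Module.finrank (ZMod 2) B'M = r := by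
    have := finrank_of_index (by omega : 2 * p - r ≤ 2 * p) (index_of_isRthMax hB')
    rw [this]; omega
  -- B' is exactly the ω-orthogonal of Br
  have horth : B'M = (omegaBilin p).orthogonal BrM := by
    refine Submodule.eq_of_le_of_finrank_le ?_ ?_
    · intro x hx
      rw [LinearMap.BilinForm.mem_orthogonal_iff]
      intro n hn
      exact hcomm n hn x hx
    · rw [LinearMap.BilinForm.finrank_orthogonal hndeg, hfinBr, hfinB', hfinV]
      omega
  have hmemB' : ∀ x : V p, x ∈ B' ↔ ∀ b ∈ Br, omega b x = 0 := by
    intro x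
    constructor
    · intro hx b hb
      have : x ∈ (omegaBilin p).orthogonal BrM := horth ▸ hx
      exact (LinearMap.BilinForm.mem_orthogonal_iff.1 this) b hb
    · intro hx
      have : x ∈ (omegaBilin p).orthogonal BrM :=
        LinearMap.BilinForm.mem_orthogonal_iff.2 fun n hn => hx n hn
      rw [← horth] at this
      exact this
  -- the key coset description of Wspace
  have hkey : ∀ (v : V p) (B : AddSubgroup (V p)),
      (B : Set (V p)) = {b | b ∈ Br ∧ omega v b = 0} →
      Wspace Br B = (v + ·) '' (B' : Set (V p)) := by
    intro v B hB
    ext w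
    simp only [Wspace, Set.mem_setOf_eq, hB, Set.mem_image, SetLike.mem_coe]
    constructor
    · intro h
      refine ⟨w - v, ?_, by abel⟩
      rw [hmemB']
      intro b hb
      have hiff : omega w b = 0 ↔ omega v b = 0 := by
        have := Set.ext_iff.1 h b
        simpa [hb] using this
      have heq : omega w b = omega v b := zmod2_eq_of_iff _ _ hiff
      rw [omega_comm, omega_sub_left, heq, sub_self]
    · rintro ⟨x, hx, rfl⟩
      have hsub : ∀ b ∈ Br, omega (v + x) b = omega v b := by
        intro b hb
        have h0 : omega b x = 0 := (hmemB' x).1 hx b hb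
        have : omega (v + x - v) b = omega (v + x) b - omega v b := omega_sub_left _ _ _
        simp only [add_sub_cancel_left] at this
        rw [omega_comm] at h0
        rw [this] at h0
        linear_combination (exp := 1) h0
      ext b
      simp only [Set.mem_setOf_eq]
      exact and_congr_right fun hb => by rw [hsub b hb]
  -- existence: every member of the family is a kernel
  have hex : ∀ B ∈ GFam Br, ∃ v : V p,
      (B : Set (V p)) = {b | b ∈ Br ∧ omega v b = 0} := by
    intro B hB
    rcases hB with rfl | ⟨hle, hrel⟩
    · refine ⟨0, ?_⟩
      ext b
      simp [omega_zero_left]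
    · -- index-2 case
      have hidx : B.index = 2 ^ (r + 1) := by
        have := AddSubgroup.relIndex_mul_index hle
        rw [hrel, index_of_isRthMax hBr] at this
        rw [← this]; ring
      have hr1 : r + 1 ≤ 2 * p := by
        have hdvd : B.index ∣ Nat.card (V p) :=
          ⟨Nat.card B, by rw [← B.card_mul_index]; ring⟩
        rw [hidx, card_V] at hdvd
        exact (Nat.pow_dvd_pow_iff_le_right one_lt_two).1 hdvd
      set BM := AddSubgroup.toZModSubmodule 2 B with hBM
      have hfinB : Module.finrank (ZMod 2) BM = 2 * p - (r + 1) :=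
        finrank_of_index hr1 hidx
      have hltsub : B'M ≤ (omegaBilin p).orthogonal BM := by
        rw [horth]
        exact LinearMap.BilinForm.orthogonal_le
          ((AddSubgroup.toZModSubmodule 2).monotone hle)
      have hne : B'M ≠ (omegaBilin p).orthogonal BM := by
        intro hEQ
        have : Module.finrank (ZMod 2) ((omegaBilin p).orthogonal BM) = 2 * p - (2 * p - (r + 1)) := by
          rw [LinearMap.BilinForm.finrank_orthogonal hndeg, hfinB, hfinV]
        rw [← hEQ, hfinB'] at this
        omega
      obtain ⟨v, hvC, hvB'⟩ := SetLike.exists_of_lt (lt_of_le_of_ne hltsub hne)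
      refine ⟨v, ?_⟩
      -- B = kerSub Br v
      have hBle : B ≤ kerSub Br v := by
        intro b hb
        refine ⟨hle hb, ?_⟩
        have : omegaBilin p b v = 0 :=
          (LinearMap.BilinForm.mem_orthogonal_iff.1 hvC) b
            ((AddSubgroup.mem_toZModSubmodule 2).2 hb)
        rw [omega_comm]
        exact this
      have hKle : kerSub Br v ≤ Br := fun b hb => hb.1
      have hKne : ¬ Br ≤ kerSub Br v := by
        intro hcon
        apply hvB'
        rw [hB'M, AddSubgroup.mem_toZModSubmodule, hmemB']
        intro b hb
        have := (hcon hb).2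
        rw [omega_comm]; exact this
      -- sandwich argument
      have hmul : B.relIndex (kerSub Br v) * (kerSub Br v).relIndex Br = 2 := by
        rw [AddSubgroup.relIndex_mul_relIndex _ _ _ hBle hKle, hrel]
      have hKBr : (kerSub Br v).relIndex Br ≠ 1 :=
        fun h => hKne (AddSubgroup.relIndex_eq_one.1 h)
      have h1 : B.relIndex (kerSub Br v) = 1 := by
        rcases (Nat.dvd_prime Nat.prime_two).1 ⟨_, hmul.symm⟩ with h | h
        · exact h
        · exfalso
          rw [h] at hmul
          have : (kerSub Br v).relIndex Br = 1 := by omega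
          exact hKBr this
      have : B = kerSub Br v := le_antisymm hBle (AddSubgroup.relIndex_eq_one.1 h1)
      rw [this]; rfl
  -- main set equality
  ext S
  simp only [Set.mem_setOf_eq]
  constructor
  · rintro ⟨B, hB, rfl⟩
    obtain ⟨v, hv⟩ := hex B hB
    exact ⟨v, hkey v B hv⟩
  · rintro ⟨v, rfl⟩
    by_cases hK : Br ≤ kerSub Br v
    · have hEQ : kerSub Br v = Br := le_antisymm (fun b hb => hb.1) hK
      refine ⟨Br, Or.inl rfl, ?_⟩
      refine (hkey v Br ?_).symm
      ext b
      exact ⟨fun hb => ⟨hb, (hK hb).2⟩, fun h => h.1⟩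
    · refine ⟨kerSub Br v, Or.inr ⟨fun b hb => hb.1, ?_⟩, (hkey v _ rfl).symm⟩
      -- relindex = 2 via the Xor' criterion
      obtain ⟨b₀, hb₀Br, hb₀K⟩ := SetLike.not_le_iff_exists.1 hK
      have hb₀1 : omega v b₀ = 1 := by
        have hne : omega v b₀ ≠ 0 := fun h => hb₀K ⟨hb₀Br, h⟩
        have hall : ∀ x : ZMod 2, x ≠ 0 → x = 1 := by decide
        exact hall _ hne
      show ((kerSub Br v).addSubgroupOf Br).index = 2
      rw [AddSubgroup.index_eq_two_iff]
      refine ⟨⟨b₀, hb₀Br⟩, ?_⟩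
      rintro ⟨b, hb⟩
      have hxor : ∀ u : ZMod 2, Xor' (u + 1 = 0) (u = 0) := by unfold Xor'; decide
      have h1 : (⟨b, hb⟩ + ⟨b₀, hb₀Br⟩ : Br) ∈ (kerSub Br v).addSubgroupOf Br ↔
          omega v b + 1 = 0 := by
        rw [AddSubgroup.mem_addSubgroupOf]
        simp only [AddSubgroup.coe_add, mem_kerSub]
        rw [omega_add_right, hb₀1]
        exact ⟨fun h => h.2, fun h => ⟨Br.add_mem hb hb₀Br, h⟩⟩
      have h2 : (⟨b, hb⟩ : Br) ∈ (kerSub Br v).addSubgroupOf Br ↔ omega v b = 0 := by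
        rw [AddSubgroup.mem_addSubgroupOf, mem_kerSub]
        exact ⟨fun h => h.2, fun h => ⟨hb, h⟩⟩
      rw [h1, h2]
      exact hxor _

end QAP
end

section
/- Closure of commutator subspaces: for an r-th maximal bi-subalgebra B^[r] of su(2^p), any B₁, B₂ ∈ 𝒢(B^[r]) and any v₁ ∈ W(B₁) and v₂ ∈ W(B₂), the sum v₁ + v₂ lies in the commutator subspace W(B₁ ⊓ B₂) determined by B₁ ⊓ B₂ ∈ 𝒢(B^[r]). -/
open scoped BigOperators

namespace QAP

/-- `omega v` as an additive hom in the second variable. -/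
def omegaHom {p : ℕ} (v : V p) : V p →+ ZMod 2 where
  toFun w := omega v w
  map_zero' := by simp [omega]
  map_add' a b := by
    simp only [omega, Prod.fst_add, Prod.snd_add, Pi.add_apply, mul_add, add_mul,
      Finset.sum_add_distrib]
    ring

/-- closure of commutator subspaces: for `B₁, B₂ ∈ 𝒢(B^[r])`,
`v₁ ∈ W(B₁)` and `v₂ ∈ W(B₂)`, the sum `v₁ + v₂` lies in the commutator
subspace `W(B₁ ⊓ B₂)` determined by `B₁ ⊓ B₂ ∈ 𝒢(B^[r])`. -/
theorem commutator_subspaces_closure {p r : ℕ} (hp : 1 ≤ p) (hr : r ≤ 2 * p)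
    (Br B₁ B₂ : AddSubgroup (V p)) (hBr : IsRthMax r Br)
    (h₁ : B₁ ∈ GFam Br) (h₂ : B₂ ∈ GFam Br)
    (v₁ : V p) (hv₁ : v₁ ∈ Wspace Br B₁)
    (v₂ : V p) (hv₂ : v₂ ∈ Wspace Br B₂) :
    ∃ B₃ ∈ GFam Br,
      (B₃ : Set (V p)) = sqcap Br (B₁ : Set (V p)) (B₂ : Set (V p)) ∧
      v₁ + v₂ ∈ Wspace Br B₃ := by
  classical
  set f : V p →+ ZMod 2 := omegaHom (v₁ + v₂) with hf
  have hfval : ∀ b, f b = omega v₁ b + omega v₂ b := by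
    intro b
    have h1 : f b = omega (v₁ + v₂) b := rfl
    rw [h1]
    simp only [omega, Prod.fst_add, Prod.snd_add, Pi.add_apply, mul_add, add_mul,
      Finset.sum_add_distrib]
    ring
  -- membership characterizations
  have hmem₁ : ∀ b, b ∈ B₁ ↔ (b ∈ Br ∧ omega v₁ b = 0) := by
    intro b
    constructor
    · intro hb
      have := hv₁ ▸ (show b ∈ (B₁ : Set (V p)) from hb)
      exact this
    · intro hb
      have : b ∈ {b : V p | b ∈ Br ∧ omega v₁ b = 0} := hb
      rw [hv₁] at this; exact this
  have hmem₂ : ∀ b, b ∈ B₂ ↔ (b ∈ Br ∧ omega v₂ b = 0) := by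
    intro b
    constructor
    · intro hb
      have := hv₂ ▸ (show b ∈ (B₂ : Set (V p)) from hb)
      exact this
    · intro hb
      have : b ∈ {b : V p | b ∈ Br ∧ omega v₂ b = 0} := hb
      rw [hv₂] at this; exact this
  set B₃ : AddSubgroup (V p) := Br ⊓ f.ker with hB3
  have hB3mem : ∀ b, b ∈ B₃ ↔ (b ∈ Br ∧ f b = 0) := by
    intro b; simp [hB3, AddSubgroup.mem_inf, AddMonoidHom.mem_ker]
  have hz : ∀ x : ZMod 2, x = 0 ∨ x = 1 := by decide
  -- set equality with sqcap
  have hset : (B₃ : Set (V p)) = sqcap Br (B₁ : Set (V p)) (B₂ : Set (V p)) := by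
    ext b
    by_cases hbr : b ∈ Br
    · simp only [SetLike.mem_coe, hB3mem, sqcap, Set.mem_union, Set.mem_inter_iff,
        Set.mem_diff, SetLike.mem_coe, hmem₁, hmem₂, hbr, true_and, not_and,
        hfval]
      rcases hz (omega v₁ b) with h1 | h1 <;> rcases hz (omega v₂ b) with h2 | h2 <;>
        simp [h1, h2] <;> decide
    · simp only [SetLike.mem_coe, hB3mem, sqcap, Set.mem_union, Set.mem_inter_iff,
        Set.mem_diff, SetLike.mem_coe, hmem₁, hmem₂, hbr, false_and]
      tauto
  have hW : v₁ + v₂ ∈ Wspace Br B₃ := by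
    show {b : V p | b ∈ Br ∧ omega (v₁ + v₂) b = 0} = (B₃ : Set (V p))
    ext b
    simp only [Set.mem_setOf_eq, SetLike.mem_coe, hB3mem]
    exact Iff.rfl
  refine ⟨B₃, ?_, hset, hW⟩
  by_cases hall : ∀ b ∈ Br, f b = 0
  · left
    ext b
    simp only [hB3mem]
    exact ⟨fun h => h.1, fun h => ⟨h, hall b h⟩⟩
  · right
    push_neg at hall
    obtain ⟨b₀, hb₀, hb₀ne⟩ := hall
    refine ⟨inf_le_left, ?_⟩
    set g : Br →+ ZMod 2 := f.comp Br.subtype with hg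
    have hgsurj : Function.Surjective g := by
      intro x
      rcases hz x with h | h
      · exact ⟨0, by simp [hg, h]⟩
      · refine ⟨⟨b₀, hb₀⟩, ?_⟩
        rcases hz (f b₀) with h0 | h1
        · exact absurd h0 hb₀ne
        · simp [hg, h1, h]
    have hker : B₃.addSubgroupOf Br = g.ker := by
      ext x
      simp [AddSubgroup.mem_addSubgroupOf, hB3mem, x.2, hg, AddMonoidHom.mem_ker]
    have : B₃.relIndex Br = g.ker.index := by
      rw [AddSubgroup.relIndex, hker]
    rw [this, AddSubgroup.index_ker]
    have hrange : g.range = ⊤ := AddMonoidHom.range_eq_top.mpr hgsurj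
    rw [hrange]
    simp [Nat.card_eq_fintype_card]
end QAP
end
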